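/- arXiv:1801.03462 — 6 statements merged into one kernel-verified Lean document; each statement's English description precedes it below -/
import Mathlib

section
/- For every even natural number k ≥ 4, the infimum of the set { r^k·(r-1)/(r^(k-1)·(r-1) - r) : r is real, r > 1 and r^(k-1)·(r-1) - r > 0 } is greater than or equal to the infimum of the set { r^k/(r^(k-1) - r) : r is real, r > 1 and r^(k-1) - r > 0 }. -/
/-!
It suffices to find, for every admissible `r`, some `s > 1` with
`improvedBound k s ≤ ampBound k r`. For `r ≤ 2` take `s = r`: after cross-multiplying, the
inequality reduces to `r (r - 1) ≤ r`. For `r > 2` we have `ampBound k r > r > 2`, while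
`improvedBound k (3/2) ≤ 2` once `k ≥ 6`; in the remaining case `k = 4`, a quartic inequality gives
`ampBound 4 r ≥ 343/132 = improvedBound 4 (7/4)` (and `7/4` is close to the minimiser `√3`).
-/

noncomputable def ampBound (k : ℕ) (r : ℝ) : ℝ := r ^ k * (r - 1) / (r ^ (k - 1) * (r - 1) - r)

noncomputable def improvedBound (k : ℕ) (s : ℝ) : ℝ := s ^ k / (s ^ (k - 1) - s)

lemma improvedBound_le_ampBound_of_le_two {k : ℕ} {r : ℝ} (hr : 1 < r) (hr2 : r ≤ 2)
    (hden : 0 < r ^ (k - 1) * (r - 1) - r) : improvedBound k r ≤ ampBound k r := by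
  have hgap : (r - 1) * (r ^ (k - 1) - r) - (r ^ (k - 1) * (r - 1) - r) = r * (2 - r) := by ring
  have hkey : r ^ (k - 1) * (r - 1) - r ≤ (r - 1) * (r ^ (k - 1) - r) := by
    linarith [mul_nonneg (zero_le_one.trans hr.le) (sub_nonneg.mpr hr2)]
  have hden' : 0 < r ^ (k - 1) - r :=
    pos_of_mul_pos_right (hden.trans_le hkey) (sub_pos.mpr hr).le
  unfold improvedBound ampBound
  rw [div_le_div_iff₀ hden' hden, mul_assoc]
  exact mul_le_mul_of_nonneg_left hkey (by positivity)

lemma lt_ampBound {k : ℕ} (hk : k ≠ 0) {r : ℝ} (hr : 1 < r)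
    (hden : 0 < r ^ (k - 1) * (r - 1) - r) : r < ampBound k r := by
  unfold ampBound
  rw [lt_div_iff₀ hden, ← pow_sub_one_mul hk r]
  nlinarith

lemma improvedBound_three_halves_le_two {k : ℕ} (hk : 6 ≤ k) : improvedBound k (3 / 2) ≤ 2 := by
  have hpow : (6 : ℝ) ≤ (3 / 2) ^ (k - 1) :=
    calc (6 : ℝ) ≤ (3 / 2) ^ 5 := by norm_num
      _ ≤ (3 / 2) ^ (k - 1) := pow_le_pow_right₀ (by norm_num) (by omega)
  unfold improvedBound
  rw [div_le_iff₀ (by linarith), ← pow_sub_one_mul (by omega : k ≠ 0)]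
  linarith

lemma improvedBound_four_seven_quarters : improvedBound 4 (7 / 4) = 343 / 132 := by
  norm_num [improvedBound]

lemma le_ampBound_four_of_two_lt {r : ℝ} (hr2 : 2 < r) : 343 / 132 ≤ ampBound 4 r := by
  have hr : 0 < r * (r - 2) := mul_pos (by linarith) (sub_pos.mpr hr2)
  have hden : 0 < r ^ 3 * (r - 1) - r := by nlinarith
  change 343 / 132 ≤ r ^ 4 * (r - 1) / (r ^ 3 * (r - 1) - r)
  rw [le_div_iff₀ hden]
  nlinarith [sq_nonneg (r - 2), sq_nonneg (r * (r - 2))]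

lemma exists_improvedBound_le_ampBound {k : ℕ} (hke : Even k) (hk : 4 ≤ k) {r : ℝ} (hr : 1 < r)
    (hden : 0 < r ^ (k - 1) * (r - 1) - r) : ∃ s, 1 < s ∧ improvedBound k s ≤ ampBound k r := by
  rcases le_or_gt r 2 with hr2 | hr2
  · exact ⟨r, hr, improvedBound_le_ampBound_of_le_two hr hr2 hden⟩
  obtain rfl | hk6 : k = 4 ∨ 6 ≤ k := by
    obtain ⟨m, rfl⟩ := hke
    omega
  · exact ⟨7 / 4, by norm_num,
      improvedBound_four_seven_quarters ▸ le_ampBound_four_of_two_lt hr2⟩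
  · exact ⟨3 / 2, by norm_num, by
      linarith [improvedBound_three_halves_le_two hk6, lt_ampBound (by omega) hr hden]⟩

theorem stmt_1 (k : ℕ) (hke : Even k) (hk : 4 ≤ k) :
    sInf {x : ℝ | ∃ r : ℝ, 1 < r ∧ r ^ (k - 1) * (r - 1) - r > 0 ∧
        x = r ^ k * (r - 1) / (r ^ (k - 1) * (r - 1) - r)} ≥
      sInf {x : ℝ | ∃ r : ℝ, 1 < r ∧ r ^ (k - 1) - r > 0 ∧
        x = r ^ k / (r ^ (k - 1) - r)} := by
  have hden : ∀ s : ℝ, 1 < s → 0 < s ^ (k - 1) - s :=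
    fun s hs => sub_pos.mpr (lt_self_pow₀ hs (by omega))
  have hbdd : BddBelow {x : ℝ | ∃ r : ℝ, 1 < r ∧ r ^ (k - 1) - r > 0 ∧
      x = r ^ k / (r ^ (k - 1) - r)} := by
    refine ⟨0, ?_⟩
    rintro _ ⟨r, hr, hr', rfl⟩
    exact div_nonneg (pow_nonneg (by linarith) k) hr'.le
  refine le_csInf ⟨ampBound k 2, 2, one_lt_two, by linarith [hden 2 one_lt_two], rfl⟩ ?_
  rintro _ ⟨r, hr, hr', rfl⟩
  obtain ⟨s, hs, hsr⟩ := exists_improvedBound_le_ampBound hke hk hr hr'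
  exact (csInf_le hbdd ⟨s, hs, hden s hs, rfl⟩).trans hsr
end

section
/- For every natural number k ≥ 6, the function f(r) = r^k·(r-1)/(r^(k-1)·(r-1) - r) is strictly increasing on the interval [2, ∞); that is, for all real numbers r₁, r₂ with 2 ≤ r₁ < r₂ one has f(r₁) < f(r₂). (Note that for r ≥ 2 and k ≥ 6 the denominator r^(k-1)·(r-1) - r is positive, so f is well defined on [2, ∞).) -/
set_option maxHeartbeats 800000

lemma aux_pow_sub (a b : ℝ) (ha : 0 ≤ a) (hab : a ≤ b) :
    ∀ n : ℕ, b ^ (n + 1) - a ^ (n + 1) ≤ (n + 1) * b ^ n * (b - a) := by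
  intro n
  induction n with
  | zero => simp
  | succ n ih =>
    have hb : 0 ≤ b := le_trans ha hab
    have hpow : a ^ (n + 1) ≤ b ^ (n + 1) := pow_le_pow_left₀ ha hab _
    calc b ^ (n + 1 + 1) - a ^ (n + 1 + 1)
        = b * (b ^ (n + 1) - a ^ (n + 1)) + a ^ (n + 1) * (b - a) := by ring
      _ ≤ b * ((n + 1) * b ^ n * (b - a)) + b ^ (n + 1) * (b - a) :=
          add_le_add (mul_le_mul_of_nonneg_left ih hb)
            (mul_le_mul_of_nonneg_right hpow (by linarith))
      _ = (↑(n + 1) + 1) * b ^ (n + 1) * (b - a) := by push_cast; ring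

theorem stmt_2 (k : ℕ) (hk : 6 ≤ k) (r₁ r₂ : ℝ) (h1 : 2 ≤ r₁) (h12 : r₁ < r₂) :
    r₁ ^ k * (r₁ - 1) / (r₁ ^ (k - 1) * (r₁ - 1) - r₁) <
      r₂ ^ k * (r₂ - 1) / (r₂ ^ (k - 1) * (r₂ - 1) - r₂) := by
  obtain ⟨n, rfl⟩ : ∃ n, k = n + 6 := ⟨k - 6, by omega⟩
  have hk1 : n + 6 - 1 = n + 5 := by omega
  rw [hk1]
  have h2' : (2:ℝ) < r₂ := lt_of_le_of_lt h1 h12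
  have hr1pos : (0:ℝ) < r₁ := by linarith
  have hr2pos : (0:ℝ) < r₂ := by linarith
  have h1' : (1:ℝ) ≤ r₁ := by linarith
  have h2le : r₁ ≤ r₂ := le_of_lt h12
  -- powers
  have hp14 : (2:ℝ) ^ (n + 3) * 2 ≤ r₁ ^ (n + 4) := by
    calc (2:ℝ) ^ (n + 3) * 2 = 2 ^ (n + 4) := by ring
      _ ≤ r₁ ^ (n + 4) := pow_le_pow_left₀ (by norm_num) h1 _
  have hp15 : r₁ ^ (n + 5) ≤ r₂ ^ (n + 5) := pow_le_pow_left₀ (by linarith) h2le _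
  have hp15pos : (0:ℝ) < r₁ ^ (n + 5) := pow_pos hr1pos _
  have hp25pos : (0:ℝ) < r₂ ^ (n + 5) := pow_pos hr2pos _
  have h2p4 : (16:ℝ) ≤ (2:ℝ) ^ (n + 3) * 2 := by
    have : (2:ℝ) ^ 3 ≤ 2 ^ (n + 3) := pow_le_pow_right₀ (by norm_num) (by omega)
    nlinarith
  -- denominators positive
  have hsq1 : r₁ ^ 2 ≤ r₁ ^ (n + 5) := pow_le_pow_right₀ h1' (by omega)
  have hsq2 : r₂ ^ 2 ≤ r₂ ^ (n + 5) := pow_le_pow_right₀ (by linarith) (by omega)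
  have hD1 : (0:ℝ) < r₁ ^ (n + 5) * (r₁ - 1) - r₁ := by nlinarith
  have hD2 : (0:ℝ) < r₂ ^ (n + 5) * (r₂ - 1) - r₂ := by nlinarith
  -- nat fact : n + 6 ≤ 2 ^ (n + 3)
  have hnat : (n:ℝ) + 6 ≤ 2 ^ (n + 3) := by
    have h2n : n < 2 ^ n := Nat.lt_two_pow_self
    have h8 : (2:ℕ) ^ (n + 3) = 8 * 2 ^ n := by ring
    have : n + 6 ≤ 2 ^ (n + 3) := by omega
    exact_mod_cast this
  -- difference bound for A = r^(n+5)*(r-1)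
  have haux : r₂ ^ (n + 6) - r₁ ^ (n + 6) ≤ ((n:ℝ) + 6) * r₂ ^ (n + 5) * (r₂ - r₁) := by
    have := aux_pow_sub r₁ r₂ (le_of_lt hr1pos) h2le (n + 5)
    push_cast at this ⊢
    convert this using 2 <;> ring
  have hAle : r₂ ^ (n + 5) * (r₂ - 1) - r₁ ^ (n + 5) * (r₁ - 1) ≤
      ((n:ℝ) + 6) * r₂ ^ (n + 5) * (r₂ - r₁) := by
    have e : r₂ ^ (n + 5) * (r₂ - 1) - r₁ ^ (n + 5) * (r₁ - 1)
        = (r₂ ^ (n + 6) - r₁ ^ (n + 6)) - (r₂ ^ (n + 5) - r₁ ^ (n + 5)) := by ring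
    linarith
  -- step : (n+6) * r₂^(n+5) * (r₁*r₂) < A₁ * A₂
  have hstep : ((n:ℝ) + 6) * r₂ ^ (n + 5) * (r₁ * r₂) <
      (r₁ ^ (n + 5) * (r₁ - 1)) * (r₂ ^ (n + 5) * (r₂ - 1)) := by
    have hfac : (2:ℝ) ^ (n + 3) * 2 * r₁ ≤ r₁ ^ (n + 5) * (r₁ - 1) := by
      have e : r₁ ^ (n + 5) = r₁ ^ (n + 4) * r₁ := by ring
      nlinarith [pow_pos hr1pos (n + 4)]
    have hhalf : r₂ / 2 < r₂ - 1 := by linarith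
    have hposX : (0:ℝ) < 2 ^ (n + 3) * 2 * r₁ * r₂ ^ (n + 5) :=
      by positivity
    have hmid : (2:ℝ) ^ (n + 3) * r₂ ^ (n + 5) * (r₁ * r₂) <
        2 ^ (n + 3) * 2 * r₁ * (r₂ ^ (n + 5) * (r₂ - 1)) := by
      have := mul_lt_mul_of_pos_left hhalf hposX
      nlinarith [this]
    have hfirst : ((n:ℝ) + 6) * r₂ ^ (n + 5) * (r₁ * r₂) ≤
        (2:ℝ) ^ (n + 3) * r₂ ^ (n + 5) * (r₁ * r₂) := by
      have hx : (0:ℝ) ≤ r₂ ^ (n + 5) * (r₁ * r₂) := by positivity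
      nlinarith [mul_le_mul_of_nonneg_right hnat hx]
    have hlast : (2:ℝ) ^ (n + 3) * 2 * r₁ * (r₂ ^ (n + 5) * (r₂ - 1)) ≤
        (r₁ ^ (n + 5) * (r₁ - 1)) * (r₂ ^ (n + 5) * (r₂ - 1)) := by
      have hy : (0:ℝ) ≤ r₂ ^ (n + 5) * (r₂ - 1) := by nlinarith
      exact mul_le_mul_of_nonneg_right hfac hy
    linarith
  -- key inequality
  have key : (r₂ ^ (n + 5) * (r₂ - 1) - r₁ ^ (n + 5) * (r₁ - 1)) * (r₁ * r₂) <
      (r₂ - r₁) * ((r₁ ^ (n + 5) * (r₁ - 1)) * (r₂ ^ (n + 5) * (r₂ - 1))) := by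
    have h12' : (0:ℝ) < r₂ - r₁ := by linarith
    have hrr : (0:ℝ) ≤ r₁ * r₂ := by positivity
    calc (r₂ ^ (n + 5) * (r₂ - 1) - r₁ ^ (n + 5) * (r₁ - 1)) * (r₁ * r₂)
        ≤ (((n:ℝ) + 6) * r₂ ^ (n + 5) * (r₂ - r₁)) * (r₁ * r₂) :=
          mul_le_mul_of_nonneg_right hAle hrr
      _ = (r₂ - r₁) * (((n:ℝ) + 6) * r₂ ^ (n + 5) * (r₁ * r₂)) := by ring
      _ < (r₂ - r₁) * ((r₁ ^ (n + 5) * (r₁ - 1)) * (r₂ ^ (n + 5) * (r₂ - 1))) :=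
          mul_lt_mul_of_pos_left hstep h12'
  rw [div_lt_div_iff₀ hD1 hD2]
  have ee : r₂ ^ (n + 6) * (r₂ - 1) * (r₁ ^ (n + 5) * (r₁ - 1) - r₁)
      - r₁ ^ (n + 6) * (r₁ - 1) * (r₂ ^ (n + 5) * (r₂ - 1) - r₂)
      = (r₂ - r₁) * ((r₁ ^ (n + 5) * (r₁ - 1)) * (r₂ ^ (n + 5) * (r₂ - 1)))
        - (r₂ ^ (n + 5) * (r₂ - 1) - r₁ ^ (n + 5) * (r₁ - 1)) * (r₁ * r₂) := by ring
  linarith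
end

section
/- For every natural number k ≥ 4 and every real number r > 1, one has r^(k-1) - r > 0 and r^k/(r^(k-1) - r) ≥ (k-1)^((k-1)/(k-2)) / (k-2). Moreover, equality holds at r = (k-1)^(1/(k-2)): this value of r is greater than 1 and satisfies r^k/(r^(k-1) - r) = (k-1)^((k-1)/(k-2)) / (k-2). -/
/-! Write `k = n + 2` and cancel `r`, so the ratio becomes `r ^ (n + 1) / (r ^ n - 1)`. With
`c = (n + 1) ^ (1 / n)` and `t = r / c`, the bound `(n + 1) c / n ≤ r ^ (n + 1) / (r ^ n - 1)` is
equivalent to `(n + 1) t ^ n ≤ n t ^ (n + 1) + 1`, an instance of weighted AM-GM that holds for all `t ≥ 0`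
with equality at `t = 1`, i.e. at `r = c`. -/

theorem succ_mul_pow_le_mul_pow_succ_add_one (n : ℕ) {t : ℝ} (ht : 0 ≤ t) :
    (n + 1) * t ^ n ≤ n * t ^ (n + 1) + 1 := by
  induction n with
  | zero => simp
  | succ n ih =>
    -- the step costs exactly `(t ^ (n + 1) - 1) * (t - 1)`, whose factors have the same sign
    have h : 0 ≤ (t ^ (n + 1) - 1) * (t - 1) := by
      rcases le_total t 1 with h | h
      · exact mul_nonneg_of_nonpos_of_nonpos (by linarith [pow_le_one₀ ht h (n := n + 1)])
          (by linarith)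
      · exact mul_nonneg (by linarith [one_le_pow₀ h (n := n + 1)]) (by linarith)
    push_cast
    linear_combination h + t * ih

theorem le_pow_succ_div_pow_sub_one {n : ℕ} (hn : 0 < n) {c r : ℝ} (hc : 0 < c)
    (hcn : c ^ n = n + 1) (hr : 1 < r) :
    (n + 1) * c / n ≤ r ^ (n + 1) / (r ^ n - 1) := by
  have key := succ_mul_pow_le_mul_pow_succ_add_one n (div_nonneg (zero_le_one.trans hr.le) hc.le)
  rw [div_pow, div_pow, pow_succ c, hcn] at key
  have hrn : 0 < r ^ n - 1 := sub_pos.mpr (one_lt_pow₀ hr hn.ne')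
  rw [div_le_div_iff₀ (Nat.cast_pos.mpr hn) hrn]
  field_simp at key
  linarith

theorem pow_succ_div_pow_sub_one_eq {n : ℕ} {c : ℝ} (hcn : c ^ n = n + 1) :
    c ^ (n + 1) / (c ^ n - 1) = (n + 1) * c / n := by
  rw [pow_succ, hcn, add_sub_cancel_right]

theorem pow_add_two_div_pow_succ_sub (n : ℕ) {r : ℝ} (hr : r ≠ 0) :
    r ^ (n + 2) / (r ^ (n + 1) - r) = r ^ (n + 1) / (r ^ n - 1) := by
  rw [pow_succ r (n + 1), pow_succ r n, ← sub_one_mul, mul_div_mul_right _ _ hr]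

theorem stmt_4 (k : ℕ) (hk : 4 ≤ k) :
    (∀ r : ℝ, 1 < r →
        r ^ (k - 1) - r > 0 ∧
          r ^ k / (r ^ (k - 1) - r) ≥
            ((k : ℝ) - 1) ^ (((k : ℝ) - 1) / ((k : ℝ) - 2)) / ((k : ℝ) - 2)) ∧
      1 < ((k : ℝ) - 1) ^ (1 / ((k : ℝ) - 2)) ∧
      (((k : ℝ) - 1) ^ (1 / ((k : ℝ) - 2))) ^ k /
          ((((k : ℝ) - 1) ^ (1 / ((k : ℝ) - 2))) ^ (k - 1) -
            ((k : ℝ) - 1) ^ (1 / ((k : ℝ) - 2))) =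
        ((k : ℝ) - 1) ^ (((k : ℝ) - 1) / ((k : ℝ) - 2)) / ((k : ℝ) - 2) := by
  obtain ⟨n, rfl⟩ : ∃ n, k = n + 2 := ⟨k - 2, by omega⟩
  have hn : 0 < n := by omega
  have hn' : (0 : ℝ) < n := Nat.cast_pos.mpr hn
  have hsub1 : ((n + 2 : ℕ) : ℝ) - 1 = n + 1 := by push_cast; ring
  have hsub2 : ((n + 2 : ℕ) : ℝ) - 2 = n := by push_cast; ring
  rw [hsub1, hsub2, show n + 2 - 1 = n + 1 from rfl]
  set c : ℝ := ((n : ℝ) + 1) ^ (1 / (n : ℝ)) with hc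
  have hc0 : 0 < c := by positivity
  have hcn : c ^ n = n + 1 := by rw [hc, one_div, Real.rpow_inv_natCast_pow (by positivity) hn.ne']
  have hexp : ((n : ℝ) + 1) ^ (((n : ℝ) + 1) / n) = (n + 1) * c := by
    rw [add_div, div_self hn'.ne', Real.rpow_add (by positivity), Real.rpow_one]
  rw [hexp]
  refine ⟨fun r hr => ⟨?_, ?_⟩, Real.one_lt_rpow (by linarith) (by positivity), ?_⟩
  · rw [pow_succ, gt_iff_lt, sub_pos]
    exact lt_mul_left (by linarith) (one_lt_pow₀ hr hn.ne')
  · rw [pow_add_two_div_pow_succ_sub n (by positivity)]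
    exact le_pow_succ_div_pow_sub_one hn hc0 hcn hr
  · rw [pow_add_two_div_pow_succ_sub n hc0.ne', pow_succ_div_pow_sub_one_eq hcn]
end

section
/- There exist a real constant c > 0 and a natural number k₀ such that for every natural number k ≥ k₀, setting L = ⌊√(k-1)⌋ (the integer part of the square root of k-1), one has (3·⌊(L-1)/2⌋ + k - 2) / (L + k - 3) ≥ 1 + c/√k. -/
theorem stmt_13 :
    ∃ (c : ℝ) (k₀ : ℕ), c > 0 ∧ ∀ k : ℕ, k₀ ≤ k →
      ∀ L : ℕ, L = ⌊Real.sqrt ((k : ℝ) - 1)⌋₊ →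
        (3 * (((L - 1) / 2 : ℕ) : ℝ) + (k : ℝ) - 2) / ((L : ℝ) + (k : ℝ) - 3) ≥
          1 + c / Real.sqrt k := by
  refine ⟨1/10, 100, by norm_num, ?_⟩
  intro k hk L hL
  set s := Real.sqrt k with hs
  have hk1 : (1:ℝ) ≤ (k:ℝ) := by exact_mod_cast Nat.one_le_iff_ne_zero.2 (by omega)
  have hk0 : (0:ℝ) ≤ (k:ℝ) - 1 := by linarith
  have hsq : s^2 = (k:ℝ) := Real.sq_sqrt (by linarith)
  have hs10 : 10 ≤ s := by
    rw [hs, show (10:ℝ) = Real.sqrt 100 by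
      rw [show (100:ℝ) = 10^2 by norm_num, Real.sqrt_sq]; norm_num]
    exact Real.sqrt_le_sqrt (by exact_mod_cast hk)
  have hs0 : 0 < s := by linarith
  -- L ≤ √(k-1) ≤ s
  have hL1 : (L:ℝ) ≤ s := by
    rw [hL]
    calc ((⌊Real.sqrt ((k:ℝ)-1)⌋₊ : ℕ) : ℝ) ≤ Real.sqrt ((k:ℝ)-1) :=
          Nat.floor_le (Real.sqrt_nonneg _)
      _ ≤ s := Real.sqrt_le_sqrt (by linarith)
  -- s ≤ √(k-1) + 1 ≤ L + 2
  have hs1 : s ≤ Real.sqrt ((k:ℝ)-1) + 1 := by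
    have h1 : (k:ℝ) ≤ (Real.sqrt ((k:ℝ)-1) + 1)^2 := by
      have := Real.sq_sqrt hk0
      have := Real.sqrt_nonneg ((k:ℝ)-1)
      nlinarith
    calc s ≤ Real.sqrt ((Real.sqrt ((k:ℝ)-1) + 1)^2) := Real.sqrt_le_sqrt h1
      _ = Real.sqrt ((k:ℝ)-1) + 1 := Real.sqrt_sq (by positivity)
  have hL2 : s ≤ (L:ℝ) + 2 := by
    have := Nat.lt_floor_add_one (Real.sqrt ((k:ℝ)-1))
    rw [← hL] at this
    linarith
  -- floor division bound
  have hm : (L:ℝ) ≤ 2 * (((L - 1) / 2 : ℕ) : ℝ) + 2 := by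
    have : L ≤ 2 * ((L - 1) / 2) + 2 := by omega
    exact_mod_cast this
  set m : ℝ := (((L - 1) / 2 : ℕ) : ℝ) with hmdef
  have hD : (0:ℝ) < (L:ℝ) + (k:ℝ) - 3 := by
    have : (100:ℝ) ≤ (k:ℝ) := by exact_mod_cast hk
    have : (0:ℝ) ≤ (L:ℝ) := Nat.cast_nonneg _
    linarith
  rw [ge_iff_le, show (1:ℝ) + (1/10)/s = (s + 1/10)/s by field_simp,
    div_le_div_iff₀ hs0 hD]
  nlinarith [mul_nonneg (sub_nonneg.2 hs10) (sub_nonneg.2 hL1),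
    mul_nonneg (sub_nonneg.2 hs10) (sub_nonneg.2 hL2),
    mul_le_mul_of_nonneg_left hm (le_of_lt hs0),
    mul_le_mul_of_nonneg_left hL2 (le_of_lt hs0),
    mul_le_mul_of_nonneg_left hL1 (le_of_lt hs0), hsq, hs10]
end

section
/- Let x, y, z, w be nonnegative real numbers and let ε be a real number with 0 < ε ≤ 1. If 2x + y + 2w ≤ z + 1 and 7z + 3 ≥ 4/ε, then 2z + 2y + 3(x+w) > 0 and (3z + 3y + 4(x+w)) / (2z + 2y + 3(x+w)) ≥ (10 - ε/2)/7. -/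
/-! With `s = x + w`, the target inequality cross-multiplies to
`0 ≤ z + y - 2s + (ε/2)(2z + 2y + 3s)`. The right side is linear in `s` with negative slope, so the
worst case is the largest `s` allowed by the first invariant, `2s = z + 1 - y`; there the second
invariant `ε(7z + 3) ≥ 4` exactly pays for the deficit. -/

theorem mul_le_seven_mul_of_invariants {y z s ε : ℝ} (hy : 0 ≤ y) (hε0 : 0 ≤ ε) (hε : ε ≤ 4 / 3)
    (hslack : 2 * s + y ≤ z + 1) (hbad : 4 ≤ ε * (7 * z + 3)) :
    (10 - ε / 2) * (2 * z + 2 * y + 3 * s) ≤ 7 * (3 * z + 3 * y + 4 * s) := by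
  -- `7N - (10 - ε/2)D = (1 - 3ε/4)(z + 1 - y - 2s) + 2y + (ε(7z + 3) - 4)/4 + εy/4`
  have hslack' : 0 ≤ (1 - 3 * ε / 4) * (z + 1 - y - 2 * s) :=
    mul_nonneg (by linarith) (by linarith)
  have hεy : 0 ≤ ε * y := mul_nonneg hε0 hy
  linarith

theorem pos_of_four_le_mul {z ε : ℝ} (hε0 : 0 < ε) (hε1 : ε ≤ 1) (hbad : 4 ≤ ε * (7 * z + 3)) :
    0 < z := by
  nlinarith

theorem stmt_14_general (x y z w ε : ℝ) (hx : 0 ≤ x) (hy : 0 ≤ y) (hw : 0 ≤ w)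
    (hε0 : 0 < ε) (hε1 : ε ≤ 1)
    (h1 : 2 * x + y + 2 * w ≤ z + 1) (h2 : 7 * z + 3 ≥ 4 / ε) :
    2 * z + 2 * y + 3 * (x + w) > 0 ∧
      (3 * z + 3 * y + 4 * (x + w)) / (2 * z + 2 * y + 3 * (x + w)) ≥
        (10 - ε / 2) / 7 := by
  have hbad : 4 ≤ ε * (7 * z + 3) := by rwa [ge_iff_le, div_le_iff₀' hε0] at h2
  have hz : 0 < z := pos_of_four_le_mul hε0 hε1 hbad
  have hden : 0 < 2 * z + 2 * y + 3 * (x + w) := by linarith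
  refine ⟨hden, ?_⟩
  rw [ge_iff_le, div_le_div_iff₀ (by norm_num) hden, mul_comm _ (7 : ℝ)]
  exact mul_le_seven_mul_of_invariants hy hε0.le (by linarith) (by linarith) hbad

theorem stmt_14 (x y z w ε : ℝ) (hx : 0 ≤ x) (hy : 0 ≤ y) (hz : 0 ≤ z) (hw : 0 ≤ w)
    (hε0 : 0 < ε) (hε1 : ε ≤ 1)
    (h1 : 2 * x + y + 2 * w ≤ z + 1) (h2 : 7 * z + 3 ≥ 4 / ε) :
    2 * z + 2 * y + 3 * (x + w) > 0 ∧
      (3 * z + 3 * y + 4 * (x + w)) / (2 * z + 2 * y + 3 * (x + w)) ≥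
        (10 - ε / 2) / 7 :=
  stmt_14_general x y z w ε hx hy hw hε0 hε1 h1 h2
end

section
/- Let k be an even natural number with k ≥ 6, let ε be a real number with 0 < ε ≤ 1, let x, w, y, v be nonnegative real numbers, and let a : ℕ → ℝ be a function with a(j) ≥ 0 for all j. Write S₀ = Σ_{j=2}^{k/2} a(2j), S₁ = Σ_{j=2}^{k/2} (4j² - 8j + 7)·a(2j), and S₂ = Σ_{j=2}^{k/2} (2j - 3)·a(2j) (sums over integers j with 2 ≤ j ≤ k/2). If S₁ ≥ (4k - 12)/ε - (k - 1) and 2(x + w) + y + (k - 4)·v ≤ 1 + S₂, then (k-1)(x+w) + (k/2 + 2)·v + 2y + 2·S₀ > 0 and (k·(x+w) + (k/2 + 3)·v + 3y + 3·S₀) / ((k-1)·(x+w) + (k/2 + 2)·v + 2y + 2·S₀) ≥ (k² - 3k + 6 - ε/2) / (k² - 4k + 7). -/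
open Finset

/-- The slack is `(K - 2j) * (K - 3 + ε (2j - 3) / 4)`. -/
lemma linear_add_quadratic_weight_le {K ε j : ℝ} (hε : 0 ≤ ε) (hj : 3 ≤ 2 * j) (hjK : 2 * j ≤ K) :
    (K - 3 - ε * (K - 1) / 4) * (2 * j - 3) + ε / 4 * (4 * j ^ 2 - 8 * j + 7) ≤
      (K - 3) ^ 2 + ε := by
  have hslack : (K - 3) ^ 2 + ε -
      ((K - 3 - ε * (K - 1) / 4) * (2 * j - 3) + ε / 4 * (4 * j ^ 2 - 8 * j + 7)) =
      (K - 2 * j) * (K - 3 + ε * (2 * j - 3) / 4) := by ring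
  have hfactor : 0 ≤ K - 3 + ε * (2 * j - 3) / 4 := by
    nlinarith [mul_nonneg hε (sub_nonneg.2 hj)]
  nlinarith [mul_nonneg (sub_nonneg.2 hjK) hfactor]

lemma weighted_sum_le {K ε : ℝ} (hε : 0 ≤ ε) {s : Finset ℕ}
    (hs : ∀ j ∈ s, 3 ≤ 2 * (j : ℝ) ∧ 2 * (j : ℝ) ≤ K) {b : ℕ → ℝ} (hb : ∀ j ∈ s, 0 ≤ b j) :
    (K - 3 - ε * (K - 1) / 4) * ∑ j ∈ s, (2 * (j : ℝ) - 3) * b j +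
        ε / 4 * ∑ j ∈ s, (4 * (j : ℝ) ^ 2 - 8 * (j : ℝ) + 7) * b j ≤
      ((K - 3) ^ 2 + ε) * ∑ j ∈ s, b j := by
  rw [mul_sum, mul_sum, mul_sum, ← sum_add_distrib]
  refine sum_le_sum fun j hj => ?_
  have hw := linear_add_quadratic_weight_le hε (hs j hj).1 (hs j hj).2
  linarith [mul_le_mul_of_nonneg_right hw (hb j hj)]

theorem ratio_lower_bound {K ε X v y S₀ S₁ S₂ : ℝ} (hK : 6 ≤ K) (hε0 : 0 < ε) (hε1 : ε ≤ 1)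
    (hX : 0 ≤ X) (hv : 0 ≤ v) (hy : 0 ≤ y) (hS₂ : 0 ≤ S₂)
    (h1 : (4 * K - 12) / ε - (K - 1) ≤ S₁)
    (h2 : 2 * X + y + (K - 4) * v ≤ 1 + S₂)
    (hS : (K - 3 - ε * (K - 1) / 4) * S₂ + ε / 4 * S₁ ≤ ((K - 3) ^ 2 + ε) * S₀) :
    0 < (K - 1) * X + (K / 2 + 2) * v + 2 * y + 2 * S₀ ∧
      (K ^ 2 - 3 * K + 6 - ε / 2) / (K ^ 2 - 4 * K + 7) ≤
        (K * X + (K / 2 + 3) * v + 3 * y + 3 * S₀) /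
          ((K - 1) * X + (K / 2 + 2) * v + 2 * y + 2 * S₀) := by
  have hc : 0 < K - 3 - ε * (K - 1) / 4 := by nlinarith
  have hεS₁ : K - 3 - ε * (K - 1) / 4 ≤ ε / 4 * S₁ := by
    have := mul_le_mul_of_nonneg_left h1 hε0.le
    rw [mul_sub, mul_div_cancel₀ _ hε0.ne'] at this
    linarith
  have hS₀ : 0 < S₀ := by
    have : 0 < ((K - 3) ^ 2 + ε) * S₀ := by nlinarith [mul_nonneg hc.le hS₂]
    exact pos_of_mul_pos_right this (by positivity)
  have hD : 0 < (K - 1) * X + (K / 2 + 2) * v + 2 * y + 2 * S₀ := by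
    nlinarith [mul_nonneg (by linarith : (0 : ℝ) ≤ K - 1) hX,
      mul_nonneg (by linarith : (0 : ℝ) ≤ K / 2 + 2) hv]
  refine ⟨hD, ?_⟩
  rw [div_le_div_iff₀ (by nlinarith) hD]
  -- With `c = K - 3 - ε (K - 1) / 4`, after cross-multiplying `X` has the negative coefficient
  -- `-2c`; `c • h2` trades it for `c (1 + S₂)`, which `hS` and `hεS₁` pay for out of `S₀`.
  have hvcoeff : 0 ≤ (3 * K ^ 2 - 25 * K + 42) / 2 + ε * (6 * K - K ^ 2) / 4 := by
    nlinarith [mul_nonneg (by linarith : (0 : ℝ) ≤ K - 6) (by linarith : (0 : ℝ) ≤ 5 * K - 14),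
      mul_nonneg (sub_nonneg.2 hε1) (by nlinarith : (0 : ℝ) ≤ K ^ 2 - 6 * K)]
  linarith [mul_le_mul_of_nonneg_left h2 hc.le, mul_nonneg hvcoeff hv,
    mul_nonneg (by positivity : (0 : ℝ) ≤ (K - 3) ^ 2 + ε + (K - 3 - ε * (K - 1) / 4)) hy]

theorem stmt_17_general (k : ℕ) (hk : 6 ≤ k) (ε : ℝ) (hε0 : 0 < ε)
    (hε1 : ε ≤ 1) (x w y v : ℝ) (hx : 0 ≤ x) (hw : 0 ≤ w) (hy : 0 ≤ y)
    (hv : 0 ≤ v) (a : ℕ → ℝ) (ha : ∀ j, 0 ≤ a j)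
    (h1 : ∑ j ∈ Finset.Icc 2 (k / 2), (4 * (j : ℝ) ^ 2 - 8 * (j : ℝ) + 7) * a (2 * j) ≥
      (4 * (k : ℝ) - 12) / ε - ((k : ℝ) - 1))
    (h2 : 2 * (x + w) + y + ((k : ℝ) - 4) * v ≤
      1 + ∑ j ∈ Finset.Icc 2 (k / 2), (2 * (j : ℝ) - 3) * a (2 * j)) :
    ((k : ℝ) - 1) * (x + w) + ((k : ℝ) / 2 + 2) * v + 2 * y +
        2 * ∑ j ∈ Finset.Icc 2 (k / 2), a (2 * j) > 0 ∧
      ((k : ℝ) * (x + w) + ((k : ℝ) / 2 + 3) * v + 3 * y +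
            3 * ∑ j ∈ Finset.Icc 2 (k / 2), a (2 * j)) /
          (((k : ℝ) - 1) * (x + w) + ((k : ℝ) / 2 + 2) * v + 2 * y +
            2 * ∑ j ∈ Finset.Icc 2 (k / 2), a (2 * j)) ≥
        ((k : ℝ) ^ 2 - 3 * (k : ℝ) + 6 - ε / 2) /
          ((k : ℝ) ^ 2 - 4 * (k : ℝ) + 7) := by
  have hs : ∀ j ∈ Icc 2 (k / 2), 3 ≤ 2 * (j : ℝ) ∧ 2 * (j : ℝ) ≤ k := by
    intro j hj
    have hj' : 3 ≤ 2 * j ∧ 2 * j ≤ k := by rw [mem_Icc] at hj; omega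
    exact ⟨by exact_mod_cast hj'.1, by exact_mod_cast hj'.2⟩
  have hS₂ : 0 ≤ ∑ j ∈ Icc 2 (k / 2), (2 * (j : ℝ) - 3) * a (2 * j) :=
    sum_nonneg fun j hj => mul_nonneg (by linarith [hs j hj]) (ha _)
  exact ratio_lower_bound (by exact_mod_cast hk) hε0 hε1 (add_nonneg hx hw) hv hy hS₂ h1 h2
    (weighted_sum_le hε0.le hs fun j _ => ha (2 * j))

theorem stmt_17 (k : ℕ) (hke : Even k) (hk : 6 ≤ k) (ε : ℝ) (hε0 : 0 < ε)
    (hε1 : ε ≤ 1) (x w y v : ℝ) (hx : 0 ≤ x) (hw : 0 ≤ w) (hy : 0 ≤ y)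
    (hv : 0 ≤ v) (a : ℕ → ℝ) (ha : ∀ j, 0 ≤ a j)
    (h1 : ∑ j ∈ Finset.Icc 2 (k / 2), (4 * (j : ℝ) ^ 2 - 8 * (j : ℝ) + 7) * a (2 * j) ≥
      (4 * (k : ℝ) - 12) / ε - ((k : ℝ) - 1))
    (h2 : 2 * (x + w) + y + ((k : ℝ) - 4) * v ≤
      1 + ∑ j ∈ Finset.Icc 2 (k / 2), (2 * (j : ℝ) - 3) * a (2 * j)) :
    ((k : ℝ) - 1) * (x + w) + ((k : ℝ) / 2 + 2) * v + 2 * y +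
        2 * ∑ j ∈ Finset.Icc 2 (k / 2), a (2 * j) > 0 ∧
      ((k : ℝ) * (x + w) + ((k : ℝ) / 2 + 3) * v + 3 * y +
            3 * ∑ j ∈ Finset.Icc 2 (k / 2), a (2 * j)) /
          (((k : ℝ) - 1) * (x + w) + ((k : ℝ) / 2 + 2) * v + 2 * y +
            2 * ∑ j ∈ Finset.Icc 2 (k / 2), a (2 * j)) ≥
        ((k : ℝ) ^ 2 - 3 * (k : ℝ) + 6 - ε / 2) /
          ((k : ℝ) ^ 2 - 4 * (k : ℝ) + 7) :=
  stmt_17_general k hk ε hε0 hε1 x w y v hx hw hy hv a ha h1 h2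
end
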